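/- For all complex q with |q| < 1, the sum over n ≥ 0 of q^{n(n+1)/2} (-1;q)_n / ((q;q)_n)^2 equals (-q;q)_∞ / (q;q)_∞, where (-1;q)_0 = 1 and (-1;q)_n = 2·(-q;q)_{n-1} for n ≥ 1. -/

import Mathlib

/-
Truncate the series: writing `t n = q ^ (n(n+1)/2) (-1;q)_n / (q;q)_n ^ 2`, the terminating
identity `∑_{n ≤ N} t n (q;q)_N / (q;q)_{N-n} = (-q;q)_N / (q;q)_N` holds for every `N`, by a
first-order recurrence in `N` that a WZ certificate turns into a telescoping sum. As `N → ∞`, the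
factor `(q;q)_N / (q;q)_{N-n} = (q^{N-n+1};q)_n` tends to `1` and has norm at most `2 ^ n`, while
`|t n| ≤ C ^ n |q| ^ (n(n+1)/2)` is summable, so Tannery's theorem passes to the limit.
-/

noncomputable def qPoch (a q : ℂ) (n : ℕ) : ℂ := ∏ i ∈ Finset.range n, (1 - a * q ^ i)

noncomputable def qPochInf (a q : ℂ) : ℂ := ∏' i : ℕ, (1 - a * q ^ i)

open Filter Topology

section QPochhammer

variable {a q : ℂ}

theorem qPoch_zero (a q : ℂ) : qPoch a q 0 = 1 := Finset.prod_range_zero _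

theorem qPoch_succ (a q : ℂ) (n : ℕ) : qPoch a q (n + 1) = qPoch a q n * (1 - a * q ^ n) :=
  Finset.prod_range_succ _ _

theorem qPoch_add (a q : ℂ) (m n : ℕ) :
    qPoch a q (m + n) = qPoch a q m * qPoch (a * q ^ m) q n := by
  simp only [qPoch, Finset.prod_range_add, pow_add, mul_assoc]

theorem continuous_qPoch_left (q : ℂ) (n : ℕ) : Continuous fun a ↦ qPoch a q n := by
  unfold qPoch; fun_prop

theorem norm_mul_pow_le_norm (hq : ‖q‖ ≤ 1) (i : ℕ) : ‖a * q ^ i‖ ≤ ‖a‖ := by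
  rw [norm_mul, norm_pow]
  exact mul_le_of_le_one_right (norm_nonneg a) (pow_le_one₀ (norm_nonneg q) hq)

theorem norm_qPoch_le (ha : ‖a‖ ≤ 1) (hq : ‖q‖ ≤ 1) (n : ℕ) : ‖qPoch a q n‖ ≤ 2 ^ n := by
  have hfactor (i : ℕ) : ‖1 - a * q ^ i‖ ≤ 2 := by
    linarith [norm_sub_le 1 (a * q ^ i), norm_one (α := ℂ), norm_mul_pow_le_norm hq i (a := a)]
  calc ‖qPoch a q n‖ = ∏ i ∈ Finset.range n, ‖1 - a * q ^ i‖ := norm_prod _ _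
    _ ≤ ∏ _i ∈ Finset.range n, 2 :=
      Finset.prod_le_prod (fun _ _ ↦ norm_nonneg _) fun i _ ↦ hfactor i
    _ = 2 ^ n := by simp

theorem pow_le_norm_qPoch (ha : ‖a‖ ≤ 1) (hq : ‖q‖ ≤ 1) (n : ℕ) :
    (1 - ‖a‖) ^ n ≤ ‖qPoch a q n‖ := by
  have hfactor (i : ℕ) : 1 - ‖a‖ ≤ ‖1 - a * q ^ i‖ := by
    linarith [norm_sub_norm_le 1 (a * q ^ i), norm_one (α := ℂ), norm_mul_pow_le_norm hq i (a := a)]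
  calc (1 - ‖a‖) ^ n = ∏ _i ∈ Finset.range n, (1 - ‖a‖) := by simp
    _ ≤ ∏ i ∈ Finset.range n, ‖1 - a * q ^ i‖ :=
      Finset.prod_le_prod (fun _ _ ↦ by linarith) fun i _ ↦ hfactor i
    _ = ‖qPoch a q n‖ := (norm_prod _ _).symm

theorem one_sub_mul_pow_ne_zero (ha : ‖a‖ < 1) (hq : ‖q‖ ≤ 1) (i : ℕ) : 1 - a * q ^ i ≠ 0 := by
  rw [sub_ne_zero]
  intro h
  have := norm_mul_pow_le_norm hq i (a := a)
  rw [← h, norm_one] at this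
  linarith

theorem qPoch_ne_zero (ha : ‖a‖ < 1) (hq : ‖q‖ ≤ 1) (n : ℕ) : qPoch a q n ≠ 0 :=
  Finset.prod_ne_zero_iff.mpr fun i _ ↦ one_sub_mul_pow_ne_zero ha hq i

theorem qPoch_eq_qPoch_sub_mul (q : ℂ) {N n : ℕ} (hn : n ≤ N) :
    qPoch q q N = qPoch q q (N - n) * qPoch (q ^ (N + 1 - n)) q n := by
  rw [show N + 1 - n = N - n + 1 by omega, pow_succ', ← qPoch_add, Nat.sub_add_cancel hn]

/- The subtraction `N + 1 - n` truncates to `0` for `n > N`, so the factor `1 - q ^ 0` vanishes: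
this is what lets the terminating sum be written as a `tsum`. -/
theorem qPoch_pow_sub_eq_zero (q : ℂ) {N n : ℕ} (hn : N < n) :
    qPoch (q ^ (N + 1 - n)) q n = 0 := by
  obtain ⟨m, rfl⟩ := Nat.exists_eq_add_of_lt hn
  rw [show N + 1 - (N + m + 1) = 0 by omega, add_comm, qPoch_add, qPoch_succ]
  simp

theorem summable_norm_mul_pow (a : ℂ) (hq : ‖q‖ < 1) : Summable fun i : ℕ ↦ ‖a * q ^ i‖ := by
  simpa only [norm_mul, norm_pow] using
    (summable_geometric_of_lt_one (norm_nonneg q) hq).mul_left ‖a‖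

theorem multipliable_qPoch (a : ℂ) (hq : ‖q‖ < 1) : Multipliable fun i : ℕ ↦ 1 - a * q ^ i := by
  simpa [sub_eq_add_neg] using multipliable_one_add_of_summable (f := fun i ↦ -(a * q ^ i))
    (by simpa only [norm_neg] using summable_norm_mul_pow a hq)

theorem tendsto_qPoch_qPochInf (a : ℂ) (hq : ‖q‖ < 1) :
    Tendsto (qPoch a q) atTop (𝓝 (qPochInf a q)) :=
  (multipliable_qPoch a hq).hasProd.tendsto_prod_nat

theorem qPochInf_ne_zero (ha : ‖a‖ < 1) (hq : ‖q‖ < 1) : qPochInf a q ≠ 0 := by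
  simpa [qPochInf, sub_eq_add_neg] using tprod_one_add_ne_zero_of_summable
    (fun i ↦ by simpa [← sub_eq_add_neg] using one_sub_mul_pow_ne_zero ha hq.le i)
    (f := fun i ↦ -(a * q ^ i)) (by simpa only [norm_neg] using summable_norm_mul_pow a hq)

end QPochhammer

theorem triangle_succ (n : ℕ) : (n + 1) * (n + 2) / 2 = n * (n + 1) / 2 + (n + 1) := by
  rw [show (n + 1) * (n + 2) = n * (n + 1) + (n + 1) * 2 by ring,
    Nat.add_mul_div_right _ _ two_pos]

theorem summable_pow_mul_pow_triangle (C : ℝ) {r : ℝ} (hr₀ : 0 ≤ r) (hr₁ : r < 1) :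
    Summable fun n : ℕ ↦ C ^ n * r ^ (n * (n + 1) / 2) := by
  refine summable_of_ratio_norm_eventually_le (r := 1 / 2) (by norm_num) ?_
  have hlim : Tendsto (fun n : ℕ ↦ |C| * r ^ (n + 1)) atTop (𝓝 0) := by
    simpa using ((tendsto_pow_atTop_nhds_zero_of_lt_one hr₀ hr₁).comp
      (tendsto_add_atTop_nat 1)).const_mul |C|
  filter_upwards [hlim.eventually_le_const (by norm_num : (0 : ℝ) < 1 / 2)] with n hn
  have hstep : ‖C ^ (n + 1) * r ^ ((n + 1) * (n + 1 + 1) / 2)‖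
      = |C| * r ^ (n + 1) * ‖C ^ n * r ^ (n * (n + 1) / 2)‖ := by
    simp only [triangle_succ, Real.norm_eq_abs, abs_mul, abs_pow, abs_of_nonneg hr₀, pow_add]
    ring
  rw [hstep]
  exact mul_le_mul_of_nonneg_right hn (norm_nonneg _)

namespace QGaussLimit

variable {q : ℂ}

noncomputable def term (q : ℂ) (n : ℕ) : ℂ :=
  q ^ (n * (n + 1) / 2) * qPoch (-1) q n / qPoch q q n ^ 2

theorem term_succ (q : ℂ) (n : ℕ) :
    term q (n + 1) = term q n * (q ^ (n + 1) * (1 + q ^ n)) / (1 - q ^ (n + 1)) ^ 2 := by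
  simp only [term, triangle_succ, qPoch_succ, pow_add, pow_one, ← pow_succ']
  simp only [div_eq_mul_inv, mul_pow, mul_inv]
  ring

noncomputable def certificate (q : ℂ) (N m : ℕ) : ℂ :=
  -(q ^ (N + 1 - m) * (1 - q ^ m) ^ 2 * term q m * (qPoch q q N / qPoch q q (N + 1 - m)))

theorem certificate_zero (q : ℂ) (N : ℕ) : certificate q N 0 = 0 := by
  simp [certificate]

theorem term_mul_qPoch_div_succ (hq : ‖q‖ < 1) {N n : ℕ} (hn : n ≤ N) :
    (1 - q ^ (N + 1)) * (term q n * (qPoch q q (N + 1) / qPoch q q (N + 1 - n)))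
      = (1 + q ^ (N + 1)) * (term q n * (qPoch q q N / qPoch q q (N - n)))
        + (certificate q N (n + 1) - certificate q N n) := by
  obtain ⟨k, rfl⟩ := Nat.exists_eq_add_of_le hn
  have hk : n + k + 1 - n = k + 1 := by omega
  have hk' : n + k + 1 - (n + 1) = k := by omega
  simp only [certificate, term_succ, hk, hk', Nat.add_sub_cancel_left, qPoch_succ, ← pow_succ']
  have hP := qPoch_ne_zero hq hq.le k
  have h1 : 1 - q ^ (n + 1) ≠ 0 := by simpa [pow_succ'] using one_sub_mul_pow_ne_zero hq hq.le n
  have h2 : 1 - q ^ (k + 1) ≠ 0 := by simpa [pow_succ'] using one_sub_mul_pow_ne_zero hq hq.le k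
  field_simp
  ring

theorem sum_term_mul_qPoch_div (hq : ‖q‖ < 1) (N : ℕ) :
    ∑ n ∈ Finset.range (N + 1), term q n * (qPoch q q N / qPoch q q (N - n))
      = qPoch (-q) q N / qPoch q q N := by
  induction N with
  | zero => simp [term, qPoch_zero]
  | succ N ih =>
    have hN : 1 - q ^ (N + 1) ≠ 0 := by
      simpa [pow_succ'] using one_sub_mul_pow_ne_zero hq hq.le N
    have htop : (1 - q ^ (N + 1)) * (term q (N + 1) * (qPoch q q (N + 1) / qPoch q q 0))
        = -certificate q N (N + 1) := by
      simp only [certificate, term_succ, qPoch_succ, Nat.sub_self, qPoch_zero, ← pow_succ']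
      have hP := qPoch_ne_zero hq hq.le N
      field_simp
    have hrec : (1 - q ^ (N + 1)) * ∑ n ∈ Finset.range (N + 2),
          term q n * (qPoch q q (N + 1) / qPoch q q (N + 1 - n))
        = (1 + q ^ (N + 1)) * ∑ n ∈ Finset.range (N + 1),
          term q n * (qPoch q q N / qPoch q q (N - n)) := by
      rw [Finset.sum_range_succ, mul_add, Nat.sub_self, htop, Finset.mul_sum, Finset.mul_sum,
        Finset.sum_congr rfl fun n hn ↦
          term_mul_qPoch_div_succ hq (Nat.lt_succ_iff.mp (Finset.mem_range.mp hn)),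
        Finset.sum_add_distrib, Finset.sum_range_sub, certificate_zero, sub_zero,
        add_neg_cancel_right]
    apply mul_left_cancel₀ hN
    rw [hrec, ih, qPoch_succ, qPoch_succ, ← pow_succ', neg_mul, sub_neg_eq_add, ← pow_succ']
    have hP := qPoch_ne_zero hq hq.le N
    field_simp

theorem tsum_term_mul_qPoch (hq : ‖q‖ < 1) (N : ℕ) :
    ∑' n, term q n * qPoch (q ^ (N + 1 - n)) q n = qPoch (-q) q N / qPoch q q N := by
  rw [tsum_eq_sum (s := Finset.range (N + 1)) fun n hn ↦ by
    rw [qPoch_pow_sub_eq_zero q (by simpa using hn), mul_zero], ← sum_term_mul_qPoch_div hq N]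
  refine Finset.sum_congr rfl fun n hn ↦ ?_
  rw [qPoch_eq_qPoch_sub_mul q (Nat.lt_succ_iff.mp (Finset.mem_range.mp hn)),
    mul_div_cancel_left₀ _ (qPoch_ne_zero hq hq.le _)]

theorem norm_term_le (hq : ‖q‖ < 1) (n : ℕ) :
    ‖term q n‖ ≤ (2 / (1 - ‖q‖) ^ 2) ^ n * ‖q‖ ^ (n * (n + 1) / 2) := by
  have hA : ‖qPoch (-1) q n‖ ≤ 2 ^ n := norm_qPoch_le (by simp) hq.le n
  have hB : ((1 - ‖q‖) ^ n) ^ 2 ≤ ‖qPoch q q n‖ ^ 2 :=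
    pow_le_pow_left₀ (by have := norm_nonneg q; positivity) (pow_le_norm_qPoch hq.le hq.le n) 2
  have h1 : 0 < 1 - ‖q‖ := by linarith
  rw [term, norm_div, norm_mul, norm_pow, norm_pow, div_pow, ← pow_mul, mul_comm 2 n, pow_mul]
  calc ‖q‖ ^ (n * (n + 1) / 2) * ‖qPoch (-1) q n‖ / ‖qPoch q q n‖ ^ 2
      ≤ ‖q‖ ^ (n * (n + 1) / 2) * 2 ^ n / ((1 - ‖q‖) ^ n) ^ 2 := by gcongr
    _ = _ := by ring

theorem tendsto_tsum_term_mul_qPoch (hq : ‖q‖ < 1) :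
    Tendsto (fun N ↦ ∑' n, term q n * qPoch (q ^ (N + 1 - n)) q n) atTop
      (𝓝 (∑' n, term q n)) := by
  refine tendsto_tsum_of_dominated_convergence
    (summable_pow_mul_pow_triangle (4 / (1 - ‖q‖) ^ 2) (norm_nonneg q) hq) (fun n ↦ ?_) ?_
  · have hpow : Tendsto (fun N : ℕ ↦ q ^ (N + 1 - n)) atTop (𝓝 0) :=
      (tendsto_pow_atTop_nhds_zero_of_norm_lt_one hq).comp
        ((tendsto_sub_atTop_nat n).comp (tendsto_add_atTop_nat 1))
    simpa [qPoch] using ((continuous_qPoch_left q n).tendsto 0).comp hpow |>.const_mul (term q n)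
  · refine Eventually.of_forall fun N n ↦ ?_
    have hR : ‖qPoch (q ^ (N + 1 - n)) q n‖ ≤ 2 ^ n :=
      norm_qPoch_le (by simpa using pow_le_one₀ (norm_nonneg q) hq.le) hq.le n
    calc ‖term q n * qPoch (q ^ (N + 1 - n)) q n‖
        ≤ (2 / (1 - ‖q‖) ^ 2) ^ n * ‖q‖ ^ (n * (n + 1) / 2) * 2 ^ n := by
          rw [norm_mul]; gcongr; exact norm_term_le hq n
      _ = _ := by
          rw [div_pow, div_pow, show (4 : ℝ) ^ n = 2 ^ n * 2 ^ n by rw [← mul_pow]; norm_num]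
          ring

end QGaussLimit

theorem stmt_6 (q : ℂ) (hq : ‖q‖ < 1) :
    ∑' n : ℕ, q ^ (n * (n + 1) / 2) * qPoch (-1) q n / (qPoch q q n) ^ 2
      = qPochInf (-q) q / qPochInf q q := by
  refine tendsto_nhds_unique (QGaussLimit.tendsto_tsum_term_mul_qPoch hq) ?_
  simp_rw [QGaussLimit.tsum_term_mul_qPoch hq]
  exact (tendsto_qPoch_qPochInf (-q) hq).div (tendsto_qPoch_qPochInf q hq) (qPochInf_ne_zero hq hq)
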